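/- Let b₁ ≥ b₂ ≥ ⋯ ≥ bₙ be integers with ∑_{i=1}^n bᵢ = −d and bᵢ − b_{i+1} ≤ 1 for all i, where d = an + b with 0 ≤ b < n. Then b₁ ≥ −a − ⌊(n+1)/2⌋ and bₙ ≤ −a + ⌊(n−1)/2⌋. -/
import Mathlib


/-- Let `b₁ ≥ b₂ ≥ ⋯ ≥ bₙ` be integers with `∑ bᵢ = −d` and
`bᵢ − b_{i+1} ≤ 1` for all `i`, where `d = an + b` with `a = ⌊d/n⌋`, `0 ≤ b < n`.
Then `b₁ ≥ −a − ⌊(n+1)/2⌋` and `bₙ ≤ −a + ⌊(n−1)/2⌋`.  (Here the sequence is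
`0`-indexed: `b₁ = c 0`, …, `bₙ = c (n-1)`.) -/
theorem stmt6 {n d : ℕ} (hn : 2 ≤ n) (c : ℕ → ℤ)
    (hmono : ∀ i : ℕ, i + 1 < n → c (i + 1) ≤ c i)
    (hgap : ∀ i : ℕ, i + 1 < n → c i - c (i + 1) ≤ 1)
    (hsum : ∑ i ∈ Finset.range n, c i = -(d : ℤ)) :
    -((d / n : ℕ) : ℤ) - (((n + 1) / 2 : ℕ) : ℤ) ≤ c 0 ∧
      c (n - 1) ≤ -((d / n : ℕ) : ℤ) + (((n - 1) / 2 : ℕ) : ℤ) := by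
  have hn0 : 0 < n := by omega
  have hanti : ∀ j, j < n → ∀ i, i ≤ j → c j ≤ c i := by
    intro j hj
    induction j with
    | zero => intro i hi; interval_cases i; exact le_refl _
    | succ k ih =>
      intro i hi
      rcases Nat.eq_or_lt_of_le hi with h | h
      · subst h; exact le_refl _
      · exact le_trans (hmono k hj) (ih (by omega) i (by omega))
  have hub : ∑ i ∈ Finset.range n, c i ≤ (n : ℤ) * c 0 := by
    calc ∑ i ∈ Finset.range n, c i ≤ ∑ _i ∈ Finset.range n, c 0 :=
          Finset.sum_le_sum (fun i hi => hanti i (Finset.mem_range.mp hi) 0 (Nat.zero_le i))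
      _ = (n : ℤ) * c 0 := by simp [mul_comm]
  have hlb : (n : ℤ) * c (n - 1) ≤ ∑ i ∈ Finset.range n, c i := by
    calc (n : ℤ) * c (n - 1) = ∑ _i ∈ Finset.range n, c (n - 1) := by simp [mul_comm]
      _ ≤ ∑ i ∈ Finset.range n, c i :=
          Finset.sum_le_sum (fun i hi =>
            hanti (n - 1) (by omega) i (by
              have := Finset.mem_range.mp hi; omega))
  have hd : (d : ℤ) = ((d / n : ℕ) : ℤ) * n + ((d % n : ℕ) : ℤ) := by
    exact_mod_cast (Nat.div_add_mod' d n).symm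
  have hr : ((d % n : ℕ) : ℤ) < n := by exact_mod_cast Nat.mod_lt _ hn0
  have hr0 : (0 : ℤ) ≤ ((d % n : ℕ) : ℤ) := Int.natCast_nonneg _
  set A : ℤ := ((d / n : ℕ) : ℤ) with hA
  have h1 : -A ≤ c 0 := by
    have h : (n : ℤ) * (-(A + 1)) < (n : ℤ) * c 0 := by
      rw [hsum] at hub; nlinarith
    have := lt_of_mul_lt_mul_left h (by positivity : (0:ℤ) ≤ (n:ℤ))
    omega
  have h2 : c (n - 1) ≤ -A := by
    have h : (n : ℤ) * c (n - 1) ≤ (n : ℤ) * (-A) := by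
      rw [hsum] at hlb; nlinarith
    exact le_of_mul_le_mul_left h (by exact_mod_cast hn0)
  have hp1 : (0 : ℤ) ≤ (((n + 1) / 2 : ℕ) : ℤ) := Int.natCast_nonneg _
  have hp2 : (0 : ℤ) ≤ (((n - 1) / 2 : ℕ) : ℤ) := Int.natCast_nonneg _
  exact ⟨by linarith, by linarith⟩
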